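/- Let T > 0, let F be a reflection kernel with bounded parameters (γ, k), and let X ∈ D_T(L1). Then ‖Ψ_F(X)‖_{T,1} ≤ k ‖X‖_{T,1} / (1 − γ). -/

import Mathlib

open MeasureTheory Set Filter
open scoped ENNReal NNReal

noncomputable section

/-- Operator norm of a kernel: `‖F‖_op = sup_{v ∈ [0,1]} ∫₀¹ |F(u,v)| du`. -/
def kernelOpNorm (F : ℝ → ℝ → ℝ) : ℝ≥0∞ :=
  ⨆ v ∈ Icc (0:ℝ) 1, ∫⁻ u in Icc (0:ℝ) 1, ENNReal.ofReal |F u v|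

/-- Composition of kernels. -/
def kernelComp (F G : ℝ → ℝ → ℝ) : ℝ → ℝ → ℝ :=
  fun u v => ∫ w in Icc (0:ℝ) 1, F u w * G w v

/-- `kernelIter F (n-1)` is the `n`-fold composition `F^(n)`; so `kernelIter F 0 = F^(1) = F`. -/
def kernelIter (F : ℝ → ℝ → ℝ) : ℕ → ℝ → ℝ → ℝ
  | 0 => F
  | n + 1 => kernelComp F (kernelIter F n)

/-- Spatial action of a kernel on `f : [0,1] × [0,T] → ℝ`. -/
def kernelApply (F f : ℝ → ℝ → ℝ) : ℝ → ℝ → ℝ :=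
  fun u t => ∫ v in Icc (0:ℝ) 1, F u v * f v t

/-- `sup_{0 ≤ t ≤ T} |f_u(t)|`, valued in `ℝ≥0∞`. -/
def pathSup (T : ℝ) (f : ℝ → ℝ → ℝ) (u : ℝ) : ℝ≥0∞ :=
  ⨆ t ∈ Icc (0:ℝ) T, ENNReal.ofReal |f u t|

/-- `‖f‖_{T,1} = ∫₀¹ sup_{0 ≤ t ≤ T} |f_u(t)| du`, valued in `ℝ≥0∞`. -/
def TNorm (T : ℝ) (f : ℝ → ℝ → ℝ) : ℝ≥0∞ :=
  ∫⁻ u in Icc (0:ℝ) 1, pathSup T f u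

/-- `f ∈ D_T(L1)`. -/
structure MemDT (T : ℝ) (f : ℝ → ℝ → ℝ) : Prop where
  rightCont : ∀ u ∈ Icc (0:ℝ) 1, ∀ t ∈ Ico (0:ℝ) T, ContinuousWithinAt (f u) (Ici t) t
  leftLim : ∀ u ∈ Icc (0:ℝ) 1, ∀ t ∈ Ioc (0:ℝ) T,
    ∃ L : ℝ, Tendsto (f u) (nhdsWithin t (Iio t)) (nhds L)
  meas : ∀ t ∈ Icc (0:ℝ) T, Measurable fun u => f u t
  finite : TNorm T f ≠ ⊤

/-- `f ∈ D_T^↑(L1)`. -/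
structure MemDTup (T : ℝ) (f : ℝ → ℝ → ℝ) : Prop where
  memDT : MemDT T f
  nonneg_zero : ∀ u ∈ Icc (0:ℝ) 1, 0 ≤ f u 0
  mono : ∀ u ∈ Icc (0:ℝ) 1, MonotoneOn (f u) (Icc (0:ℝ) T)

/-- `F` is a reflection kernel with bounded parameters `(γ, k)`. -/
structure IsReflKernel (F : ℝ → ℝ → ℝ) (γ : ℝ) (k : ℕ) : Prop where
  meas : Measurable (Function.uncurry F)
  nonneg : ∀ u ∈ Icc (0:ℝ) 1, ∀ v ∈ Icc (0:ℝ) 1, 0 ≤ F u v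
  opNorm_le_one : kernelOpNorm F ≤ 1
  gamma_mem : γ ∈ Set.Ioo (0:ℝ) 1
  k_pos : 1 ≤ k
  iter_le : kernelOpNorm (kernelIter F (k - 1)) ≤ ENNReal.ofReal γ

/-- The map `π_{X,F}`: `π_{X,F}(W)_u(t) = sup_{0 ≤ s ≤ t} max(−X_u(s) + (F W)_u(s), 0)`. -/
def piMap (X F W : ℝ → ℝ → ℝ) : ℝ → ℝ → ℝ :=
  fun u t => ⨆ s : Icc (0:ℝ) t, max (-(X u s.1) + kernelApply F W u s.1) 0

end

noncomputable section

/-- `Y = Ψ_F(X)`: `Y` is the (unique) fixed point of `π_{X,F}` in `D_T^↑(L1)`. -/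
def IsRegulator (T : ℝ) (X F Y : ℝ → ℝ → ℝ) : Prop :=
  MemDTup T Y ∧ ∀ u ∈ Icc (0:ℝ) 1, ∀ t ∈ Icc (0:ℝ) T, Y u t = piMap X F Y u t

end

/-!
The regulator `Ψ = Ψ_F(X)` is nonnegative and nondecreasing in time, so its path supremum is
`g u = Ψ_u(T)`, and the fixed-point equation gives `g ≤ S + F g` with `S u = sup_t |X_u(t)|`.
Unrolling this `k` times gives `g ≤ ∑_{i<k} Fⁱ S + F^(k) g`. Integrating over `u`, every
application of `F` costs at most `‖F‖_op ≤ 1` and `F^(k)` costs at most `γ`, so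
`‖Ψ‖ ≤ k ‖X‖ + γ ‖Ψ‖`; since `‖Ψ‖ < ∞`, the bound follows.
-/

open Function Finset

local notation "𝕀" => Icc (0:ℝ) 1

theorem biSup_Icc_eq_biSup_insert_inter_Ico {α : Type*} [CompleteLinearOrder α]
    [TopologicalSpace α] [OrderClosedTopology α] {g : ℝ → α} {a b : ℝ} {D : Set ℝ}
    (hab : a ≤ b) (hD : Dense D) (hg : ∀ t ∈ Ico a b, ContinuousWithinAt g (Ici t) t) :
    ⨆ t ∈ Icc a b, g t = ⨆ t ∈ insert b (D ∩ Ico a b), g t := by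
  refine le_antisymm (iSup₂_le fun t ht => ?_) (biSup_mono ?_)
  · rcases ht.2.eq_or_lt with rfl | htb
    · exact le_biSup g (mem_insert _ _)
    · have hcl : t ∈ closure (Ioo t b ∩ D) :=
        closure_minimal (hD.open_subset_closure_inter isOpen_Ioo) isClosed_closure
          (by rw [closure_Ioo htb.ne]; exact left_mem_Icc.2 htb.le)
      have := mem_closure_iff_nhdsWithin_neBot.1 hcl
      refine le_of_tendsto
        ((hg t ⟨ht.1, htb⟩).mono fun s (hs : s ∈ Ioo t b ∩ D) => hs.1.1.le) ?_
      filter_upwards [self_mem_nhdsWithin] with s hs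
      exact le_biSup g (mem_insert_of_mem _ ⟨hs.2, ht.1.trans hs.1.1.le, hs.1.2⟩)
  · rintro t (rfl | ⟨-, ht⟩)
    exacts [right_mem_Icc.2 hab, Ico_subset_Icc_self ht]

theorem ENNReal.ofReal_iSup_le {ι : Sort*} {f : ι → ℝ} {C : ℝ≥0∞}
    (h : ∀ i, ENNReal.ofReal (f i) ≤ C) : ENNReal.ofReal (⨆ i, f i) ≤ C := by
  rcases eq_or_ne C ⊤ with rfl | hC
  · exact le_top
  · rw [ENNReal.ofReal_le_iff_le_toReal hC]
    exact Real.iSup_le (fun i => (ENNReal.ofReal_le_iff_le_toReal hC).1 (h i))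
      ENNReal.toReal_nonneg

theorem ENNReal.le_div_of_le_add_mul {A B c : ℝ≥0∞} (hc : c < 1) (hA : A ≠ ⊤)
    (h : A ≤ B + c * A) : A ≤ B / (1 - c) := by
  rw [ENNReal.le_div_iff_mul_le (.inl (tsub_pos_of_lt hc).ne')
      (.inl (ENNReal.sub_ne_top ENNReal.one_ne_top)),
    ENNReal.mul_sub fun _ _ => hA, mul_one, tsub_le_iff_right, mul_comm]
  exact h

/-- Right continuity lets the supremum over `[0, T]` run over a countable set. -/
theorem MemDT.exists_measurable_eq_pathSup {T : ℝ} {X : ℝ → ℝ → ℝ} (hT : 0 ≤ T)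
    (hX : MemDT T X) :
    ∃ S : ℝ → ℝ≥0∞, Measurable S ∧ ∀ u ∈ 𝕀, pathSup T X u = S u := by
  set D := insert T (range ((↑) : ℚ → ℝ) ∩ Ico 0 T)
  have hD : D ⊆ Icc 0 T := by
    rintro t (rfl | ⟨-, ht⟩)
    exacts [right_mem_Icc.2 hT, Ico_subset_Icc_self ht]
  refine ⟨fun u => ⨆ t ∈ D, ENNReal.ofReal |X u t|, ?_, fun u hu => ?_⟩
  · exact Measurable.biSup D (((countable_range _).mono Set.inter_subset_left).insert T)
      fun t ht => (hX.meas t (hD ht)).abs.ennreal_ofReal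
  · exact biSup_Icc_eq_biSup_insert_inter_Ico hT Rat.denseRange_cast fun t ht =>
      (ENNReal.continuous_ofReal.comp continuous_abs).continuousAt.comp_continuousWithinAt
        (hX.rightCont u hu t ht)

theorem MemDTup.nonneg {T : ℝ} {f : ℝ → ℝ → ℝ} (hf : MemDTup T f) {u t : ℝ}
    (hu : u ∈ 𝕀) (ht : t ∈ Icc 0 T) : 0 ≤ f u t :=
  (hf.nonneg_zero u hu).trans (hf.mono u hu ⟨le_rfl, ht.1.trans ht.2⟩ ht ht.1)

theorem MemDTup.pathSup_eq_ofReal {T : ℝ} {f : ℝ → ℝ → ℝ} (hf : MemDTup T f)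
    (hT : 0 ≤ T) {u : ℝ} (hu : u ∈ 𝕀) : pathSup T f u = ENNReal.ofReal (f u T) := by
  have hTmem : T ∈ Icc 0 T := right_mem_Icc.2 hT
  refine le_antisymm (iSup₂_le fun t ht => ?_) ?_
  · rw [abs_of_nonneg (hf.nonneg hu ht)]
    exact ENNReal.ofReal_le_ofReal (hf.mono u hu ht hTmem ht.2)
  · rw [← abs_of_nonneg (hf.nonneg hu hTmem)]
    exact le_biSup (fun t => ENNReal.ofReal |f u t|) hTmem

noncomputable section ENNKernel

variable {K L : ℝ → ℝ → ℝ≥0∞}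

/-- For nonnegative kernels we work in `ℝ≥0∞`, where Tonelli needs no integrability. -/
def ennKernelApply (K : ℝ → ℝ → ℝ≥0∞) (h : ℝ → ℝ≥0∞) : ℝ → ℝ≥0∞ :=
  fun u => ∫⁻ v in 𝕀, K u v * h v

def ennKernelComp (K L : ℝ → ℝ → ℝ≥0∞) : ℝ → ℝ → ℝ≥0∞ :=
  fun u v => ∫⁻ w in 𝕀, K u w * L w v

def ennKernelIter (K : ℝ → ℝ → ℝ≥0∞) : ℕ → ℝ → ℝ → ℝ≥0∞
  | 0 => K
  | n + 1 => ennKernelComp K (ennKernelIter K n)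

theorem measurable_ennKernelApply (hK : Measurable (uncurry K)) {h : ℝ → ℝ≥0∞}
    (hh : Measurable h) : Measurable (ennKernelApply K h) :=
  (hK.mul (hh.comp measurable_snd)).lintegral_prod_right'

theorem measurable_iterate_ennKernelApply (hK : Measurable (uncurry K)) {h : ℝ → ℝ≥0∞}
    (hh : Measurable h) : ∀ n, Measurable ((ennKernelApply K)^[n] h)
  | 0 => hh
  | n + 1 => by
    rw [iterate_succ_apply']
    exact measurable_ennKernelApply hK (measurable_iterate_ennKernelApply hK hh n)

theorem measurable_ennKernelComp (hK : Measurable (uncurry K)) (hL : Measurable (uncurry L)) :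
    Measurable (uncurry (ennKernelComp K L)) := by
  have : Measurable fun p : (ℝ × ℝ) × ℝ => K p.1.1 p.2 * L p.2 p.1.2 :=
    (hK.comp (measurable_fst.fst.prodMk measurable_snd)).mul
      (hL.comp (measurable_snd.prodMk measurable_fst.snd))
  exact this.lintegral_prod_right'

theorem measurable_ennKernelIter (hK : Measurable (uncurry K)) :
    ∀ n, Measurable (uncurry (ennKernelIter K n))
  | 0 => hK
  | n + 1 => measurable_ennKernelComp hK (measurable_ennKernelIter hK n)

theorem lintegral_ennKernelApply_le {c : ℝ≥0∞} (hK : Measurable (uncurry K))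
    (hcol : ∀ v ∈ 𝕀, ∫⁻ u in 𝕀, K u v ≤ c) {h : ℝ → ℝ≥0∞}
    (hh : Measurable h) :
    ∫⁻ u in 𝕀, ennKernelApply K h u ≤ c * ∫⁻ v in 𝕀, h v :=
  calc ∫⁻ u in 𝕀, ennKernelApply K h u
      = ∫⁻ v in 𝕀, ∫⁻ u in 𝕀, K u v * h v :=
        lintegral_lintegral_swap (hK.mul (hh.comp measurable_snd)).aemeasurable
    _ = ∫⁻ v in 𝕀, (∫⁻ u in 𝕀, K u v) * h v :=
        lintegral_congr fun v => lintegral_mul_const _ hK.of_uncurry_right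
    _ ≤ ∫⁻ v in 𝕀, c * h v :=
        setLIntegral_mono' measurableSet_Icc fun v hv => by gcongr; exact hcol v hv
    _ = c * ∫⁻ v in 𝕀, h v := lintegral_const_mul c hh

theorem ennKernelApply_ennKernelApply (hK : Measurable (uncurry K))
    (hL : Measurable (uncurry L)) {h : ℝ → ℝ≥0∞} (hh : Measurable h) :
    ennKernelApply K (ennKernelApply L h) = ennKernelApply (ennKernelComp K L) h := by
  funext u
  calc ∫⁻ w in 𝕀, K u w * ∫⁻ v in 𝕀, L w v * h v
      = ∫⁻ w in 𝕀, ∫⁻ v in 𝕀, K u w * (L w v * h v) :=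
        lintegral_congr fun w => (lintegral_const_mul _ (hL.of_uncurry_left.mul hh)).symm
    _ = ∫⁻ v in 𝕀, ∫⁻ w in 𝕀, K u w * (L w v * h v) :=
        lintegral_lintegral_swap ((hK.of_uncurry_left.comp measurable_fst).mul
          (hL.mul (hh.comp measurable_snd))).aemeasurable
    _ = ∫⁻ v in 𝕀, (∫⁻ w in 𝕀, K u w * L w v) * h v := by
        refine lintegral_congr fun v => ?_
        simp_rw [← mul_assoc]
        exact lintegral_mul_const _ (hK.of_uncurry_left.mul hL.of_uncurry_right)

theorem iterate_ennKernelApply_succ (hK : Measurable (uncurry K)) {h : ℝ → ℝ≥0∞}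
    (hh : Measurable h) (n : ℕ) :
    (ennKernelApply K)^[n + 1] h = ennKernelApply (ennKernelIter K n) h := by
  induction n with
  | zero => rfl
  | succ n ih =>
    rw [iterate_succ_apply', ih,
      ennKernelApply_ennKernelApply hK (measurable_ennKernelIter hK n) hh]
    rfl

theorem lintegral_iterate_ennKernelApply_le {c : ℝ≥0∞} (hK : Measurable (uncurry K))
    (hcol : ∀ v ∈ 𝕀, ∫⁻ u in 𝕀, K u v ≤ c) {h : ℝ → ℝ≥0∞}
    (hh : Measurable h) (n : ℕ) :
    ∫⁻ u in 𝕀, (ennKernelApply K)^[n] h u ≤ c ^ n * ∫⁻ u in 𝕀, h u := by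
  induction n with
  | zero => simp
  | succ n ih =>
    rw [iterate_succ_apply', pow_succ', mul_assoc]
    calc _ ≤ c * ∫⁻ u in 𝕀, (ennKernelApply K)^[n] h u :=
          lintegral_ennKernelApply_le hK hcol (measurable_iterate_ennKernelApply hK hh n)
      _ ≤ _ := by gcongr

theorem lintegral_ennKernelIter_le {c : ℝ≥0∞} (hK : Measurable (uncurry K))
    (hcol : ∀ v ∈ 𝕀, ∫⁻ u in 𝕀, K u v ≤ c) (n : ℕ) :
    ∀ v ∈ 𝕀, ∫⁻ u in 𝕀, ennKernelIter K n u v ≤ c ^ (n + 1) := by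
  induction n with
  | zero => simpa [ennKernelIter] using hcol
  | succ n ih =>
    intro v hv
    calc ∫⁻ u in 𝕀, ennKernelIter K (n + 1) u v
        ≤ c * ∫⁻ w in 𝕀, ennKernelIter K n w v :=
          lintegral_ennKernelApply_le (h := fun w => ennKernelIter K n w v) hK hcol
            (measurable_ennKernelIter hK n).of_uncurry_right
      _ ≤ c * c ^ (n + 1) := by gcongr; exact ih v hv
      _ = c ^ (n + 1 + 1) := (pow_succ' c _).symm

theorem ennKernelApply_mono {a b : ℝ → ℝ≥0∞} (hab : ∀ v ∈ 𝕀, a v ≤ b v)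
    (u : ℝ) :
    ennKernelApply K a u ≤ ennKernelApply K b u :=
  setLIntegral_mono' measurableSet_Icc fun v hv => by gcongr; exact hab v hv

theorem ennKernelApply_add (hK : Measurable (uncurry K)) {a b : ℝ → ℝ≥0∞}
    (ha : Measurable a) (u : ℝ) :
    ennKernelApply K (a + b) u = ennKernelApply K a u + ennKernelApply K b u := by
  simp only [ennKernelApply, Pi.add_apply, mul_add]
  exact lintegral_add_left (hK.of_uncurry_left.mul ha) _

theorem iterate_ennKernelApply_le_add (hK : Measurable (uncurry K)) {a b c : ℝ → ℝ≥0∞}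
    (hb : Measurable b) (habc : ∀ v ∈ 𝕀, a v ≤ b v + c v) (n : ℕ) :
    ∀ u ∈ 𝕀,
      (ennKernelApply K)^[n] a u ≤ (ennKernelApply K)^[n] b u + (ennKernelApply K)^[n] c u := by
  induction n generalizing a b c with
  | zero => exact habc
  | succ n ih =>
    refine ih (measurable_ennKernelApply hK hb) fun v _ => ?_
    rw [← ennKernelApply_add hK hb]
    exact ennKernelApply_mono habc v

theorem le_sum_iterate_add_iterate (hK : Measurable (uncurry K)) {g S : ℝ → ℝ≥0∞}
    (hS : Measurable S) (hgS : ∀ u ∈ 𝕀, g u ≤ S u + ennKernelApply K g u) (n : ℕ) :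
    ∀ u ∈ 𝕀,
      g u ≤ ∑ i ∈ range n, (ennKernelApply K)^[i] S u + (ennKernelApply K)^[n] g u := by
  induction n with
  | zero => simp
  | succ n ih =>
    intro u hu
    calc g u ≤ ∑ i ∈ range n, (ennKernelApply K)^[i] S u + (ennKernelApply K)^[n] g u :=
          ih u hu
      _ ≤ ∑ i ∈ range n, (ennKernelApply K)^[i] S u
            + ((ennKernelApply K)^[n] S u + (ennKernelApply K)^[n + 1] g u) := by
          gcongr
          exact iterate_ennKernelApply_le_add hK hS hgS n u hu
      _ = _ := by rw [sum_range_succ, add_assoc]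

theorem lintegral_le_of_le_add_ennKernelApply (hK : Measurable (uncurry K)) {k : ℕ}
    (hk : 1 ≤ k) {γ : ℝ≥0∞} (hcol : ∀ v ∈ 𝕀, ∫⁻ u in 𝕀, K u v ≤ 1)
    (hcolk : ∀ v ∈ 𝕀, ∫⁻ u in 𝕀, ennKernelIter K (k - 1) u v ≤ γ)
    {g S : ℝ → ℝ≥0∞} (hg : Measurable g) (hS : Measurable S)
    (hgS : ∀ u ∈ 𝕀, g u ≤ S u + ennKernelApply K g u) :
    ∫⁻ u in 𝕀, g u ≤ k * (∫⁻ u in 𝕀, S u) + γ * ∫⁻ u in 𝕀, g u := by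
  obtain ⟨n, rfl⟩ := Nat.exists_eq_add_of_le' hk
  have hSi := measurable_iterate_ennKernelApply hK hS
  calc ∫⁻ u in 𝕀, g u
      ≤ ∫⁻ u in 𝕀, (∑ i ∈ range (n + 1), (ennKernelApply K)^[i] S u
          + (ennKernelApply K)^[n + 1] g u) :=
        setLIntegral_mono' measurableSet_Icc (le_sum_iterate_add_iterate hK hS hgS (n + 1))
    _ = ∑ i ∈ range (n + 1), (∫⁻ u in 𝕀, (ennKernelApply K)^[i] S u)
          + ∫⁻ u in 𝕀, ennKernelApply (ennKernelIter K n) g u := by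
        rw [lintegral_add_left (Finset.measurable_sum _ fun i _ => hSi i),
          lintegral_finsetSum _ fun i _ => hSi i, iterate_ennKernelApply_succ hK hg]
    _ ≤ ∑ _i ∈ range (n + 1), (∫⁻ u in 𝕀, S u) + γ * ∫⁻ u in 𝕀, g u := by
        refine add_le_add (sum_le_sum fun i _ => ?_)
          (lintegral_ennKernelApply_le (measurable_ennKernelIter hK n) hcolk hg)
        simpa using lintegral_iterate_ennKernelApply_le hK hcol hS i
    _ = _ := by simp [nsmul_eq_mul]

end ENNKernel

noncomputable section RealKernel

variable {F : ℝ → ℝ → ℝ}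

def ofRealKernel (F : ℝ → ℝ → ℝ) : ℝ → ℝ → ℝ≥0∞ :=
  fun u v => ENNReal.ofReal (F u v)

theorem measurable_ofRealKernel (hF : Measurable (uncurry F)) :
    Measurable (uncurry (ofRealKernel F)) :=
  hF.ennreal_ofReal

theorem lintegral_ofReal_le_of_kernelOpNorm_le {c : ℝ≥0∞} (hF : kernelOpNorm F ≤ c)
    {v : ℝ} (hv : v ∈ 𝕀) : ∫⁻ u in 𝕀, ENNReal.ofReal (F u v) ≤ c :=
  calc ∫⁻ u in 𝕀, ENNReal.ofReal (F u v)
      ≤ ∫⁻ u in 𝕀, ENNReal.ofReal |F u v| :=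
        lintegral_mono fun _ => ENNReal.ofReal_le_ofReal (le_abs_self _)
    _ ≤ kernelOpNorm F := le_biSup (fun v => ∫⁻ u in 𝕀, ENNReal.ofReal |F u v|) hv
    _ ≤ c := hF

theorem kernelIter_nonneg (hF : ∀ u ∈ 𝕀, ∀ v ∈ 𝕀, 0 ≤ F u v) (n : ℕ) :
    ∀ u ∈ 𝕀, ∀ v ∈ 𝕀, 0 ≤ kernelIter F n u v := by
  induction n with
  | zero => exact hF
  | succ n ih =>
    intro u hu v hv
    exact setIntegral_nonneg measurableSet_Icc fun w hw =>
      mul_nonneg (hF u hu w hw) (ih w hw v hv)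

theorem measurable_kernelIter (hF : Measurable (uncurry F)) :
    ∀ n, Measurable (uncurry (kernelIter F n))
  | 0 => hF
  | n + 1 => by
    have : Measurable fun p : (ℝ × ℝ) × ℝ => F p.1.1 p.2 * kernelIter F n p.2 p.1.2 :=
      (hF.comp (measurable_fst.fst.prodMk measurable_snd)).mul
        ((measurable_kernelIter hF n).comp (measurable_snd.prodMk measurable_fst.snd))
    exact this.stronglyMeasurable.integral_prod_right'.measurable

/-- The column bound makes the `ℝ≥0∞`-valued iterates a.e. finite, so no integrability of the
Bochner integrands defining `kernelIter` has to be checked. -/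
theorem ennKernelIter_ofReal_ae_eq (hFm : Measurable (uncurry F))
    (hF : ∀ u ∈ 𝕀, ∀ v ∈ 𝕀, 0 ≤ F u v) (hop : kernelOpNorm F ≤ 1) (n : ℕ)
    {v : ℝ} (hv : v ∈ 𝕀) :
    ∀ᵐ u ∂volume.restrict 𝕀,
      ennKernelIter (ofRealKernel F) n u v = ENNReal.ofReal (kernelIter F n u v) := by
  have hK := measurable_ofRealKernel hFm
  have hcol := lintegral_ennKernelIter_le hK fun v hv =>
    lintegral_ofReal_le_of_kernelOpNorm_le hop hv
  induction n with
  | zero => exact .of_forall fun _ => rfl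
  | succ n ih =>
    have hfin := ae_lt_top (measurable_ennKernelIter hK (n + 1)).of_uncurry_right
      ((hcol (n + 1) v hv).trans_lt (by simp)).ne
    filter_upwards [hfin, ae_restrict_mem measurableSet_Icc] with u hfin hu
    have hlint : ∫⁻ w in 𝕀, ENNReal.ofReal (F u w * kernelIter F n w v)
        = ennKernelIter (ofRealKernel F) (n + 1) u v := by
      refine lintegral_congr_ae ?_
      filter_upwards [ih, ae_restrict_mem measurableSet_Icc] with w hw hwI
      rw [ENNReal.ofReal_mul (hF u hu w hwI), hw]
      rfl
    rw [← hlint] at hfin ⊢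
    rw [← ENNReal.ofReal_toReal hfin.ne, ← integral_eq_lintegral_of_nonneg_ae]
    · rfl
    · filter_upwards [ae_restrict_mem measurableSet_Icc] with w hw
      exact mul_nonneg (hF u hu w hw) (kernelIter_nonneg hF n w hw v hv)
    · exact (hFm.of_uncurry_left.mul
        (measurable_kernelIter hFm n).of_uncurry_right).aestronglyMeasurable

end RealKernel

theorem IsRegulator.ofReal_le {T : ℝ} {X F Y : ℝ → ℝ → ℝ} (hY : IsRegulator T X F Y)
    (hT : 0 ≤ T) (hF : ∀ u ∈ 𝕀, ∀ v ∈ 𝕀, 0 ≤ F u v) {u : ℝ}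
    (hu : u ∈ 𝕀) :
    ENNReal.ofReal (Y u T) ≤ pathSup T X u
      + ennKernelApply (ofRealKernel F) (fun v => ENNReal.ofReal (Y v T)) u := by
  obtain ⟨hYup, hYfix⟩ := hY
  have hTmem : T ∈ Icc 0 T := right_mem_Icc.2 hT
  rw [hYfix u hu T hTmem]
  refine ENNReal.ofReal_iSup_le fun s => ?_
  have hFY : ‖kernelApply F Y u s‖ₑ
      ≤ ennKernelApply (ofRealKernel F) (fun v => ENNReal.ofReal (Y v T)) u :=
    (enorm_integral_le_lintegral_enorm _).trans <|
      setLIntegral_mono' measurableSet_Icc fun v hv => by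
        rw [Real.enorm_eq_ofReal (mul_nonneg (hF u hu v hv) (hYup.nonneg hv s.2)),
          ENNReal.ofReal_mul (hF u hu v hv)]
        exact mul_le_mul_right (ENNReal.ofReal_le_ofReal (hYup.mono v hv s.2 hTmem s.2.2)) _
  calc ENNReal.ofReal (max (-X u s + kernelApply F Y u s) 0)
      ≤ ENNReal.ofReal (|X u s| + |kernelApply F Y u s|) :=
        ENNReal.ofReal_le_ofReal
          (max_le (add_le_add (neg_le_abs _) (le_abs_self _)) (by positivity))
    _ = ENNReal.ofReal |X u s| + ‖kernelApply F Y u s‖ₑ := by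
        rw [ENNReal.ofReal_add (abs_nonneg _) (abs_nonneg _), Real.enorm_eq_ofReal_abs]
    _ ≤ _ := add_le_add (le_biSup (fun t => ENNReal.ofReal |X u t|) s.2) hFY

theorem le_ofReal_div_mul_of_le_add_mul {A N : ℝ≥0∞} {k : ℕ} {γ : ℝ} (hγ₀ : 0 ≤ γ)
    (hγ₁ : γ < 1) (hA : A ≠ ⊤) (h : A ≤ k * N + ENNReal.ofReal γ * A) :
    A ≤ ENNReal.ofReal (k / (1 - γ)) * N := by
  calc A ≤ k * N / (1 - ENNReal.ofReal γ) :=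
        ENNReal.le_div_of_le_add_mul (ENNReal.ofReal_lt_one.2 hγ₁) hA h
    _ = _ := by
        rw [ENNReal.ofReal_div_of_pos (by linarith), ENNReal.ofReal_sub 1 hγ₀,
          ENNReal.ofReal_one, ENNReal.ofReal_natCast, ENNReal.mul_div_right_comm]

/-- norm bound on the regulator: `‖Ψ_F(X)‖_{T,1} ≤ k ‖X‖_{T,1} / (1 − γ)`. -/
theorem regulator_norm_bound
    (T : ℝ) (hT : 0 < T) (F : ℝ → ℝ → ℝ) (γ : ℝ) (k : ℕ) (hF : IsReflKernel F γ k)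
    (X Y : ℝ → ℝ → ℝ) (hX : MemDT T X) (hY : IsRegulator T X F Y) :
    TNorm T Y ≤ ENNReal.ofReal ((k : ℝ) / (1 - γ)) * TNorm T X := by
  obtain ⟨S, hS, hXS⟩ := hX.exists_measurable_eq_pathSup hT.le
  have hTX : TNorm T X = ∫⁻ u in 𝕀, S u := setLIntegral_congr_fun measurableSet_Icc hXS
  have hTY : TNorm T Y = ∫⁻ u in 𝕀, ENNReal.ofReal (Y u T) :=
    setLIntegral_congr_fun measurableSet_Icc fun u hu => hY.1.pathSup_eq_ofReal hT.le hu
  have hK := measurable_ofRealKernel hF.meas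
  have hcolk : ∀ v ∈ 𝕀, ∫⁻ u in 𝕀,
      ennKernelIter (ofRealKernel F) (k - 1) u v ≤ ENNReal.ofReal γ :=
    fun v hv => (lintegral_congr_ae (ennKernelIter_ofReal_ae_eq hF.meas hF.nonneg
      hF.opNorm_le_one (k - 1) hv)).trans_le
        (lintegral_ofReal_le_of_kernelOpNorm_le hF.iter_le hv)
  have hrec := lintegral_le_of_le_add_ennKernelApply hK hF.k_pos
    (fun v hv => lintegral_ofReal_le_of_kernelOpNorm_le hF.opNorm_le_one hv) hcolk
    ((hY.1.memDT.meas T (right_mem_Icc.2 hT.le)).ennreal_ofReal) hS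
    fun u hu => hXS u hu ▸ hY.ofReal_le hT.le hF.nonneg hu
  rw [← hTX, ← hTY] at hrec
  exact le_ofReal_div_mul_of_le_add_mul hF.gamma_mem.1.le hF.gamma_mem.2 hY.1.memDT.finite hrec
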